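/- arXiv:2310.05088 — 3 statements merged into one kernel-verified Lean document; each statement's English description precedes it below -/
import Mathlib

section
/- Let a, b, T, h₀ be real numbers with a > b ≥ 0 (hence a > 0), T > 0 and h₀ ∈ [0,1]. Let p : [0,T] → [0,1] be monotone nondecreasing, and let m : [0,T] → ℝ be continuous with m(T) ≥ −1 and satisfying, for every t ∈ [0,T], m(t) ≤ −h₀ + ∫₀ᵗ (a·m(s) + b + (a−b)·p(s)) ds. Then p(T) ≥ (e^{aT}(h₀ − b/a) + b/a − 1) / ((1 − b/a)(e^{aT} − 1)). -/
/-!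
Since `p` is nondecreasing, `p s ≤ p T` on `[0, T]`, so `m` satisfies the linear integral
inequality `m t ≤ -h₀ + ∫₀ᵗ (a m s + c)` with the constant `c = b + (a - b) p T`. Grönwall's
inequality in integral form then gives `m T ≤ -h₀ e^{aT} + (c / a)(e^{aT} - 1)`, and combined with
`m T ≥ -1` this is a linear inequality in `p T` that rearranges to the bound.
-/

open Set MeasureTheory

theorem le_gronwallBound_of_le_integral {m g : ℝ → ℝ} {δ K ε t₀ T : ℝ} (hK : 0 ≤ K)
    (hm : ContinuousOn m (Icc t₀ T)) (hg : IntervalIntegrable g volume t₀ T)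
    (hgm : ∀ s ∈ Icc t₀ T, g s ≤ K * m s + ε)
    (hint : ∀ t ∈ Icc t₀ T, m t ≤ δ + ∫ s in t₀..t, g s) :
    ∀ t ∈ Icc t₀ T, m t ≤ gronwallBound δ K ε (t - t₀) := by
  intro t ht
  have hle : t₀ ≤ T := ht.1.trans ht.2
  -- extend `m` continuously to `ℝ` so that the comparison function is differentiable everywhere
  set m' : ℝ → ℝ := fun x => m (projIcc t₀ T hle x)
  have hm' : Continuous m' :=
    hm.comp_continuous (continuous_subtype_val.comp continuous_projIcc) fun x => (projIcc _ _ _ x).2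
  have hm'_eq : EqOn m' m (Icc t₀ T) := fun x hx => by simp [m', projIcc_of_mem hle hx]
  set f : ℝ → ℝ := fun t => δ + ∫ s in t₀..t, (K * m' s + ε)
  have hintegrand : Continuous (fun s => K * m' s + ε) := by fun_prop
  have hf_deriv (x : ℝ) : HasDerivAt f (K * m' x + ε) x :=
    ((hintegrand.integral_hasStrictDerivAt t₀ x).hasDerivAt).const_add δ
  have hf : Continuous f := continuous_iff_continuousAt.2 fun x => (hf_deriv x).continuousAt
  have hmf : ∀ x ∈ Icc t₀ T, m x ≤ f x := by
    intro x hx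
    have hsub : Icc t₀ x ⊆ Icc t₀ T := Icc_subset_Icc_right hx.2
    refine (hint x hx).trans (add_le_add_right ?_ δ)
    refine intervalIntegral.integral_mono_on hx.1
      (hg.mono_set (by simpa [uIcc_of_le hx.1, uIcc_of_le hle] using hsub))
      (hintegrand.intervalIntegrable _ _) fun s hs => ?_
    rw [hm'_eq (hsub hs)]
    exact hgm s (hsub hs)
  calc m t ≤ f t := hmf t ht
    _ ≤ gronwallBound δ K ε (t - t₀) := by
      refine le_gronwallBound_of_liminf_deriv_right_le hf.continuousOn
        (fun x _ r hr => (hf_deriv x).hasDerivWithinAt.liminf_right_slope_le hr)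
        (by simp [f]) (fun x hx => ?_) t ht
      rw [hm'_eq (Ico_subset_Icc_self hx)]
      exact add_le_add_left (mul_le_mul_of_nonneg_left (hmf x (Ico_subset_Icc_self hx)) hK) ε

theorem div_le_of_neg_one_le_gronwallBound {a b h₀ q T : ℝ} (ha : 0 < a) (hab : b < a)
    (hT : 0 < T) (h : -1 ≤ gronwallBound (-h₀) a (b + (a - b) * q) T) :
    (Real.exp (a * T) * (h₀ - b / a) + b / a - 1) / ((1 - b / a) * (Real.exp (a * T) - 1)) ≤ q := by
  rw [gronwallBound_of_K_ne_0 ha.ne'] at h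
  set E := Real.exp (a * T)
  have hE : 1 < E := Real.one_lt_exp_iff.2 (mul_pos ha hT)
  have hr : b / a < 1 := (div_lt_one ha).2 hab
  have hc : (b + (a - b) * q) / a = b / a + (1 - b / a) * q := by field_simp
  rw [div_le_iff₀ (mul_pos (sub_pos.2 hr) (sub_pos.2 hE))]
  simp only [hc] at h
  linarith

theorem exit_prob_lower_bound_core_general (a b T h₀ : ℝ)
    (hab : b < a) (hb : 0 ≤ b) (hT : 0 < T)
    (p : ℝ → ℝ)
    (hpmono : MonotoneOn p (Set.Icc (0 : ℝ) T))
    (m : ℝ → ℝ) (hm : ContinuousOn m (Set.Icc (0 : ℝ) T)) (hmT : -1 ≤ m T)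
    (hint : ∀ t ∈ Set.Icc (0 : ℝ) T,
      m t ≤ -h₀ + ∫ s in (0 : ℝ)..t, (a * m s + b + (a - b) * p s)) :
    p T ≥ (Real.exp (a * T) * (h₀ - b / a) + b / a - 1) /
      ((1 - b / a) * (Real.exp (a * T) - 1)) := by
  have ha : 0 < a := hb.trans_lt hab
  have hTmem : T ∈ Icc (0 : ℝ) T := right_mem_Icc.2 hT.le
  have hp_int : IntervalIntegrable p volume 0 T :=
    MonotoneOn.intervalIntegrable (by rwa [uIcc_of_le hT.le])
  have hbound : ∀ s ∈ Icc (0 : ℝ) T,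
      a * m s + b + (a - b) * p s ≤ a * m s + (b + (a - b) * p T) := fun s hs => by
    linarith [mul_le_mul_of_nonneg_left (hpmono hs hTmem hs.2) (sub_nonneg.2 hab.le)]
  refine div_le_of_neg_one_le_gronwallBound ha hab hT ?_
  calc -1 ≤ m T := hmT
    _ ≤ gronwallBound (-h₀) a (b + (a - b) * p T) (T - 0) :=
      le_gronwallBound_of_le_integral ha.le hm
        ((((hm.intervalIntegrable_of_Icc hT.le).const_mul a).add intervalIntegrable_const).add
          (hp_int.const_mul _)) hbound hint T hTmem
    _ = gronwallBound (-h₀) a (b + (a - b) * p T) T := by rw [sub_zero]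

/-- analytic core of the finite-horizon bound of Theorem 1. If
`p : [0,T] → [0,1]` is nondecreasing and `m` is continuous with `m T ≥ -1` and
satisfies the integral inequality
`m t ≤ -h₀ + ∫₀ᵗ (a m s + b + (a - b) p s) ds` on `[0, T]`, then
`p T ≥ (e^{aT}(h₀ - b/a) + b/a - 1) / ((1 - b/a)(e^{aT} - 1))`. -/
theorem exit_prob_lower_bound_core (a b T h₀ : ℝ)
    (hab : b < a) (hb : 0 ≤ b) (hT : 0 < T) (hh₀ : h₀ ∈ Set.Icc (0 : ℝ) 1)
    (p : ℝ → ℝ) (hp01 : ∀ t ∈ Set.Icc (0 : ℝ) T, p t ∈ Set.Icc (0 : ℝ) 1)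
    (hpmono : MonotoneOn p (Set.Icc (0 : ℝ) T))
    (m : ℝ → ℝ) (hm : ContinuousOn m (Set.Icc (0 : ℝ) T)) (hmT : -1 ≤ m T)
    (hint : ∀ t ∈ Set.Icc (0 : ℝ) T,
      m t ≤ -h₀ + ∫ s in (0 : ℝ)..t, (a * m s + b + (a - b) * p s)) :
    p T ≥ (Real.exp (a * T) * (h₀ - b / a) + b / a - 1) /
      ((1 - b / a) * (Real.exp (a * T) - 1)) :=
  exit_prob_lower_bound_core_general a b T h₀ hab hb hT p hpmono m hm hmT hint
end

section
/- Let a, b, T, h₀ be real numbers with a > b ≥ 0 (hence a > 0), T > 0 and h₀ ∈ [0,1]. Let p : [0,T] → [0,1] be monotone nondecreasing, and let m : [0,T] → ℝ be continuous satisfying, for every t ∈ [0,T], m(t) ≤ −h₀ + ∫₀ᵗ (a·m(s) + b + (a−b)·p(s)) ds. Then, by the integral form of Grönwall's inequality, m(T) ≤ −h₀·e^{aT} + (b/a)(e^{aT} − 1) + ((a−b)/a)·p(T)·(e^{aT} − 1). -/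
/-!
Since `a - b > 0` and `p` is nondecreasing, replacing `p s` by `p T` only enlarges the
integrand, which leaves an integral inequality with constant forcing `C = b + (a - b) p T`.
The right-hand side `v t = -h₀ + ∫₀ᵗ (a m + C)` dominates `m`, so `v' ≤ a v + C`, and the
differential Grönwall inequality bounds `v T` by `-h₀ e^{aT} + (C / a)(e^{aT} - 1)`.
-/

open MeasureTheory Set intervalIntegral

theorem le_gronwallBound_of_le_integral_s6 {u : ℝ → ℝ} {δ K ε a b : ℝ} (hK : 0 ≤ K)
    (hu : ContinuousOn u (Icc a b))
    (h : ∀ t ∈ Icc a b, u t ≤ δ + ∫ s in a..t, (K * u s + ε)) :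
    ∀ t ∈ Icc a b, u t ≤ gronwallBound δ K ε (t - a) := by
  intro t ht
  have hab : a ≤ b := ht.1.trans ht.2
  -- Extending `u` continuously to all of `ℝ` makes the primitive differentiable at the endpoints.
  set ū : ℝ → ℝ := fun s => u (projIcc a b hab s)
  have hū : Continuous ū := hu.comp_continuous continuous_projIcc.subtype_val fun s => (projIcc a b hab s).2
  have hūu : ∀ s ∈ Icc a b, ū s = u s := fun s hs => by simp [ū, projIcc_of_mem hab hs]
  set v : ℝ → ℝ := fun t => δ + ∫ s in a..t, (K * ū s + ε)
  have hv' : ∀ t, HasDerivAt v (K * ū t + ε) t := fun t =>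
    ((hū.const_smul K).add continuous_const).integral_hasStrictDerivAt a t
      |>.hasDerivAt.const_add δ
  have hu_le_v : ∀ t ∈ Icc a b, u t ≤ v t := by
    intro t ht
    refine (h t ht).trans_eq (congrArg (δ + ·) (integral_congr fun s hs => ?_))
    rw [uIcc_of_le ht.1] at hs
    simp only [hūu s ⟨hs.1, hs.2.trans ht.2⟩]
  have hv_bound : ∀ t ∈ Icc a b, v t ≤ gronwallBound δ K ε (t - a) :=
    le_gronwallBound_of_liminf_deriv_right_le (fun t _ => (hv' t).continuousAt.continuousWithinAt)
      (fun t _ _ hr => (hv' t).hasDerivWithinAt.liminf_right_slope_le hr) (by simp [v])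
      fun t ht => by
        rw [hūu t (Ico_subset_Icc_self ht)]
        gcongr
        exact hu_le_v t (Ico_subset_Icc_self ht)
  exact (hu_le_v t ht).trans (hv_bound t ht)

theorem integral_add_mul_le_of_monotoneOn {f p : ℝ → ℝ} {a b c t : ℝ} (hc : 0 ≤ c)
    (hf : IntervalIntegrable f volume a t) (hp : MonotoneOn p (Icc a b)) (ht : t ∈ Icc a b) :
    ∫ s in a..t, (f s + c * p s) ≤ ∫ s in a..t, (f s + c * p b) := by
  have hp_int : IntervalIntegrable p volume a t :=
    (hp.mono (by rw [uIcc_of_le ht.1]; exact Icc_subset_Icc_right ht.2)).intervalIntegrable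
  refine integral_mono_on ht.1 (hf.add (hp_int.const_mul c)) (hf.add intervalIntegrable_const)
    fun s hs => ?_
  gcongr
  exact hp ⟨hs.1, hs.2.trans ht.2⟩ ⟨ht.1.trans ht.2, le_rfl⟩ (hs.2.trans ht.2)

theorem gronwall_step_general (a b T h₀ : ℝ)
    (hab : b < a) (hb : 0 ≤ b) (hT : 0 < T)
    (p : ℝ → ℝ)
    (hpmono : MonotoneOn p (Set.Icc (0 : ℝ) T))
    (m : ℝ → ℝ) (hm : ContinuousOn m (Set.Icc (0 : ℝ) T))
    (hint : ∀ t ∈ Set.Icc (0 : ℝ) T,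
      m t ≤ -h₀ + ∫ s in (0 : ℝ)..t, (a * m s + b + (a - b) * p s)) :
    m T ≤ -h₀ * Real.exp (a * T) + (b / a) * (Real.exp (a * T) - 1) +
      ((a - b) / a) * p T * (Real.exp (a * T) - 1) := by
  have ha : 0 < a := hb.trans_lt hab
  have hint' : ∀ t ∈ Icc (0 : ℝ) T,
      m t ≤ -h₀ + ∫ s in (0 : ℝ)..t, (a * m s + (b + (a - b) * p T)) := by
    intro t ht
    have hf : IntervalIntegrable (fun s => a * m s + b) volume 0 t :=
      ((hm.mono (Icc_subset_Icc_right ht.2)).const_smul a |>.add continuousOn_const)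
        |>.intervalIntegrable_of_Icc ht.1
    simpa only [add_assoc] using (hint t ht).trans
      (add_le_add_right (integral_add_mul_le_of_monotoneOn (sub_pos.2 hab).le hf hpmono ht) _)
  have hT_mem : T ∈ Icc (0 : ℝ) T := ⟨hT.le, le_rfl⟩
  refine (le_gronwallBound_of_le_integral_s6 ha.le hm hint' T hT_mem).trans_eq ?_
  rw [gronwallBound_of_K_ne_0 ha.ne', sub_zero]
  field_simp
  ring

/-- the Grönwall estimation step in the proof of Theorem 1. If
`p : [0,T] → [0,1]` is nondecreasing and `m` is continuous and satisfies the integral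
inequality `m t ≤ -h₀ + ∫₀ᵗ (a m s + b + (a - b) p s) ds` on `[0, T]`, then
`m T ≤ -h₀ e^{aT} + (b/a)(e^{aT} - 1) + ((a-b)/a) p T (e^{aT} - 1)`. -/
theorem gronwall_step (a b T h₀ : ℝ)
    (hab : b < a) (hb : 0 ≤ b) (hT : 0 < T) (hh₀ : h₀ ∈ Set.Icc (0 : ℝ) 1)
    (p : ℝ → ℝ) (hp01 : ∀ t ∈ Set.Icc (0 : ℝ) T, p t ∈ Set.Icc (0 : ℝ) 1)
    (hpmono : MonotoneOn p (Set.Icc (0 : ℝ) T))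
    (m : ℝ → ℝ) (hm : ContinuousOn m (Set.Icc (0 : ℝ) T))
    (hint : ∀ t ∈ Set.Icc (0 : ℝ) T,
      m t ≤ -h₀ + ∫ s in (0 : ℝ)..t, (a * m s + b + (a - b) * p s)) :
    m T ≤ -h₀ * Real.exp (a * T) + (b / a) * (Real.exp (a * T) - 1) +
      ((a - b) / a) * p T * (Real.exp (a * T) - 1) :=
  gronwall_step_general a b T h₀ hab hb hT p hpmono m hm hint
end

section
/- Fix T > 0 and h₀ ∈ [0,1], and define B_T(a,b,h₀) = (e^{aT}(h₀ − b/a) + b/a − 1) / ((1 − b/a)(e^{aT} − 1)). Then: (i) for every fixed b ≥ 0, the map a ↦ B_T(a,b,h₀) is monotone nondecreasing on (max(b,0), ∞); and (ii) for every fixed a > 0, the map b ↦ B_T(a,b,h₀) is monotone nonincreasing on [0, a). -/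
private lemma key_rewrite (T h₀ a b : ℝ) (hT : 0 < T) (ha : 0 < a) (hab : b < a) :
    (Real.exp (a * T) * (h₀ - b / a) + b / a - 1) /
        ((1 - b / a) * (Real.exp (a * T) - 1)) =
      1 - (1 - h₀) * (Real.exp (a * T) / (Real.exp (a * T) - 1)) * (a / (a - b)) := by
  have hE : 1 < Real.exp (a * T) := by
    have : 0 < a * T := mul_pos ha hT
    exact Real.one_lt_exp_iff.mpr this
  have hE' : Real.exp (a * T) - 1 ≠ 0 := by linarith
  have ha' : a ≠ 0 := ne_of_gt ha
  have hab' : a - b ≠ 0 := by linarith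
  have h1 : (1 : ℝ) - b / a = (a - b) / a := by field_simp
  rw [h1]
  field_simp
  ring

/-- monotonicity of the finite-horizon bound
`B_T(a,b,h₀) = (e^{aT}(h₀ - b/a) + b/a - 1) / ((1 - b/a)(e^{aT} - 1))`:
it is nondecreasing in `a` on `(max b 0, ∞)` for fixed `b ≥ 0`, and nonincreasing in
`b` on `[0, a)` for fixed `a > 0`. -/
theorem finite_horizon_bound_monotone (T h₀ : ℝ) (hT : 0 < T)
    (hh₀ : h₀ ∈ Set.Icc (0 : ℝ) 1) :
    (∀ b : ℝ, 0 ≤ b → MonotoneOn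
      (fun a : ℝ => (Real.exp (a * T) * (h₀ - b / a) + b / a - 1) /
        ((1 - b / a) * (Real.exp (a * T) - 1)))
      (Set.Ioi (max b 0))) ∧
    (∀ a : ℝ, 0 < a → AntitoneOn
      (fun b : ℝ => (Real.exp (a * T) * (h₀ - b / a) + b / a - 1) /
        ((1 - b / a) * (Real.exp (a * T) - 1)))
      (Set.Ico (0 : ℝ) a)) := by
  obtain ⟨hh0, hh1⟩ := hh₀
  constructor
  · intro b hb a₁ ha₁ a₂ ha₂ h12
    simp only [Set.mem_Ioi, lt_max_iff, max_lt_iff] at ha₁ ha₂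
    have ha₁b : b < a₁ := ha₁.1
    have ha₁0 : 0 < a₁ := ha₁.2
    have ha₂b : b < a₂ := ha₂.1
    have ha₂0 : 0 < a₂ := ha₂.2
    simp only
    rw [key_rewrite T h₀ a₁ b hT ha₁0 ha₁b, key_rewrite T h₀ a₂ b hT ha₂0 ha₂b]
    have hE₁ : 1 < Real.exp (a₁ * T) := by
      have : 0 < a₁ * T := mul_pos ha₁0 hT
      exact Real.one_lt_exp_iff.mpr this
    have hE₂ : 1 < Real.exp (a₂ * T) := by
      have : 0 < a₂ * T := mul_pos ha₂0 hT
      exact Real.one_lt_exp_iff.mpr this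
    have hEle : Real.exp (a₁ * T) ≤ Real.exp (a₂ * T) :=
      Real.exp_le_exp.mpr (by nlinarith)
    have hr : Real.exp (a₂ * T) / (Real.exp (a₂ * T) - 1) ≤
        Real.exp (a₁ * T) / (Real.exp (a₁ * T) - 1) := by
      rw [div_le_div_iff₀ (by linarith) (by linarith)]
      nlinarith
    have hs : a₂ / (a₂ - b) ≤ a₁ / (a₁ - b) := by
      rw [div_le_div_iff₀ (by linarith) (by linarith)]
      nlinarith
    have hr₁pos : 0 < Real.exp (a₁ * T) / (Real.exp (a₁ * T) - 1) :=
      div_pos (by linarith) (by linarith)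
    have hs₂pos : 0 < a₂ / (a₂ - b) := div_pos ha₂0 (by linarith)
    have hprod : Real.exp (a₂ * T) / (Real.exp (a₂ * T) - 1) * (a₂ / (a₂ - b)) ≤
        Real.exp (a₁ * T) / (Real.exp (a₁ * T) - 1) * (a₁ / (a₁ - b)) :=
      mul_le_mul hr hs hs₂pos.le hr₁pos.le
    nlinarith [mul_le_mul_of_nonneg_left hprod (by linarith : (0:ℝ) ≤ 1 - h₀)]
  · intro a ha b₁ hb₁ b₂ hb₂ h12
    simp only [Set.mem_Ico] at hb₁ hb₂
    simp only
    rw [key_rewrite T h₀ a b₁ hT ha hb₁.2, key_rewrite T h₀ a b₂ hT ha hb₂.2]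
    have hE : 1 < Real.exp (a * T) := by
      have : 0 < a * T := mul_pos ha hT
      exact Real.one_lt_exp_iff.mpr this
    have hrpos : 0 < Real.exp (a * T) / (Real.exp (a * T) - 1) :=
      div_pos (by linarith) (by linarith)
    have hs : a / (a - b₁) ≤ a / (a - b₂) := by
      rw [div_le_div_iff₀ (by linarith [hb₁.2]) (by linarith [hb₂.2])]
      nlinarith [hb₂.2]
    have hprod : Real.exp (a * T) / (Real.exp (a * T) - 1) * (a / (a - b₁)) ≤
        Real.exp (a * T) / (Real.exp (a * T) - 1) * (a / (a - b₂)) :=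
      mul_le_mul_of_nonneg_left hs hrpos.le
    nlinarith [mul_le_mul_of_nonneg_left hprod (by linarith : (0:ℝ) ≤ 1 - h₀)]
end
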